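/- Let p be prime, 0, α, β distinct integers, R = ℤ_p[x]/(x(x−α)(x−β)), r₁, r₂, r₃ ≥ 0, and a₁, a₂, a₃ ∈ ℤ_p. The ℤ_p-submodule I of R spanned by g₁ = p^{r₁} + a₁x + a₂x(x−α), g₂ = p^{r₂}x + a₃x(x−α), g₃ = p^{r₃}x(x−α) is an ideal of R if and only if the following three conditions hold: (1) p^{r₂} + a₃(β−α) ∈ p^{r₃}ℤ_p; (2) p^{r₁} + αa₁ ∈ p^{r₂}ℤ_p; (3) (p^{r₂} − αa₃)a₁ + βp^{r₂}a₂ − p^{r₁}a₃ ∈ p^{r₂+r₃}ℤ_p. -/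

import Mathlib

/-- `ℤ_p`, the localization of `ℤ` at the prime `p`. -/
instance Zp.isPrime (p : ℕ) [Fact p.Prime] : (Ideal.span {(p : ℤ)}).IsPrime := by
  rw [Ideal.span_singleton_prime (by exact_mod_cast (Fact.out : p.Prime).ne_zero)]
  exact Nat.prime_iff_prime_int.mp Fact.out

abbrev Zp (p : ℕ) [Fact p.Prime] : Type := Localization.AtPrime (Ideal.span {(p : ℤ)})
open Polynomial

/-- The ring `R = ℤ_p[x]/(x(x−α)(x−β))`. -/
abbrev Rq (p : ℕ) [Fact p.Prime] (α β : ℤ) : Type :=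
  (Zp p)[X] ⧸ Ideal.span {X * (X - C ((α : ℤ) : Zp p)) * (X - C ((β : ℤ) : Zp p))}

/-!
Since `R` is generated by `x` as a `ℤ_p`-algebra, the span `I` is an ideal iff `x gᵢ ∈ I` for
`i = 1, 2, 3`. In the `ℤ_p`-basis `1, x, x(x-α)` of `R`, multiplication by `x` sends
`(c₀, c₁, c₂)` to `(0, c₀ + α c₁, c₁ + β c₂)`, because `x · x(x-α) = β x(x-α)` in `R`.
The generators have triangular coordinates, so a vector with vanishing constant coordinate lies
in `I` only if its `g₁`-coefficient is `0`; the other coefficients are then forced by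
the `x`- and `x(x-α)`-coordinates. This gives `x g₃ = β g₃ ∈ I`, `x g₂ ∈ I ↔ (1)` and
`x g₁ ∈ I ↔ (2) ∧ (3)`.
-/

open Submodule in
theorem forall_mul_mem_span_iff_of_adjoin_eq_top {A S : Type*} [CommSemiring A] [CommSemiring S]
    [Algebra A S] {x : S} (hx : Algebra.adjoin A {x} = ⊤) {s : Set S} :
    (∀ r : S, ∀ z ∈ span A s, r * z ∈ span A s) ↔ ∀ g ∈ s, x * g ∈ span A s := by
  refine ⟨fun h g hg => h x g (subset_span hg), fun h r => ?_⟩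
  have hx_mul : span A s ≤ (span A s).comap (LinearMap.mulLeft A x) := span_le.mpr h
  have hr : r ∈ Algebra.adjoin A {x} := hx ▸ Algebra.mem_top
  induction hr using Algebra.adjoin_induction with
  | mem y hy => rw [Set.mem_singleton_iff.mp hy]; exact fun z hz => hx_mul hz
  | algebraMap a => exact fun z hz => by rw [← Algebra.smul_def]; exact smul_mem _ a hz
  | add r₁ r₂ _ _ h₁ h₂ => exact fun z hz => by rw [add_mul]; exact add_mem (h₁ z hz) (h₂ z hz)
  | mul r₁ r₂ _ _ h₁ h₂ => exact fun z hz => by rw [mul_assoc]; exact h₁ _ (h₂ z hz)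

theorem adjoin_mk_X_eq_top {A : Type*} [CommRing A] (I : Ideal A[X]) :
    Algebra.adjoin A {Ideal.Quotient.mk I X} = ⊤ := by
  have himage : {Ideal.Quotient.mk I X} = Ideal.Quotient.mkₐ A I '' {X} := by simp
  rw [himage, Algebra.adjoin_image, adjoin_X, Algebra.map_top, AlgHom.range_eq_top]
  exact Ideal.Quotient.mkₐ_surjective A I

section CubicQuotient

variable {A : Type*} [CommRing A] (α β : A)

local notation "S" => A[X] ⧸ Ideal.span {X * (X - C α) * (X - C β)}

local notation "ξ" => Ideal.Quotient.mk (Ideal.span {X * (X - C α) * (X - C β)}) X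

noncomputable def ofCoords : A × A × A →ₗ[A] S where
  toFun c := algebraMap A S c.1 + algebraMap A S c.2.1 * ξ
    + algebraMap A S c.2.2 * (ξ * (ξ - algebraMap A S α))
  map_add' c d := by simp only [Prod.fst_add, Prod.snd_add, map_add]; ring
  map_smul' u c := by
    rw [RingHom.id_apply]
    refine Eq.trans ?_ (Algebra.smul_def (A := S) u _).symm
    simp only [Prod.smul_fst, Prod.smul_snd, smul_eq_mul, map_mul]
    ring

theorem ofCoords_apply (c : A × A × A) : ofCoords α β c = algebraMap A S c.1
    + algebraMap A S c.2.1 * ξ + algebraMap A S c.2.2 * (ξ * (ξ - algebraMap A S α)) := rfl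

theorem mk_X_mul_ofCoords (c : A × A × A) :
    ξ * ofCoords α β c = ofCoords α β (0, c.1 + α * c.2.1, c.2.1 + β * c.2.2) := by
  have hcubic : ξ * (ξ - algebraMap A S α) * (ξ - algebraMap A S β) = 0 := by
    simp only [← Ideal.Quotient.mk_algebraMap, Polynomial.algebraMap_eq, ← map_sub, ← map_mul,
      Ideal.Quotient.eq_zero_iff_mem]
    exact Ideal.mem_span_singleton_self _
  simp only [ofCoords_apply, map_zero, map_add, map_mul]
  linear_combination algebraMap A S c.2.2 * hcubic

theorem ofCoords_injective : Function.Injective (ofCoords α β) := by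
  rw [injective_iff_map_eq_zero]
  rintro ⟨c₀, c₁, c₂⟩ hc
  nontriviality A
  set f : A[X] := C c₀ + C (c₁ - α * c₂) * X + C c₂ * X ^ 2 with hf_def
  have hf : Ideal.Quotient.mk _ f = ofCoords α β (c₀, c₁, c₂) := by
    simp only [f, ofCoords_apply, ← Ideal.Quotient.mk_algebraMap, Polynomial.algebraMap_eq,
      map_add, map_mul, map_sub, map_pow]
    ring
  rw [← hf, Ideal.Quotient.eq_zero_iff_mem, Ideal.mem_span_singleton] at hc
  have hf0 : f = 0 := by
    by_contra hne
    refine ((monic_X.mul (monic_X_sub_C α)).mul (monic_X_sub_C β)).not_dvd_of_natDegree_lt hne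
      ?_ hc
    have hcubic : (X * (X - C α) * (X - C β)).natDegree = 3 := by compute_degree!
    have hquad : f.natDegree ≤ 2 := by rw [hf_def]; compute_degree
    omega
  have h₂ : c₂ = 0 := by simpa [f] using congrArg (coeff · 2) hf0
  have h₁ : c₁ - α * c₂ = 0 := by simpa [f] using congrArg (coeff · 1) hf0
  have h₀ : c₀ = 0 := by simpa [f] using congrArg (coeff · 0) hf0
  rw [h₂, mul_zero, sub_zero] at h₁
  rw [h₀, h₁, h₂, Prod.mk_zero_zero, Prod.mk_zero_zero]

theorem ofCoords_mem_span_iff {c v₁ v₂ v₃ : A × A × A} :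
    ofCoords α β c ∈ Submodule.span A {ofCoords α β v₁, ofCoords α β v₂, ofCoords α β v₃} ↔
      c ∈ Submodule.span A {v₁, v₂, v₃} := by
  simp only [Submodule.mem_span_triple, ← map_smul, ← map_add, (ofCoords_injective α β).eq_iff]

theorem mk_zero_mem_span_triangular_iff [NoZeroDivisors A] {P₁ P₂ P₃ a₁ a₂ a₃ c₁ c₂ : A}
    (hP₁ : P₁ ≠ 0) :
    ((0, c₁, c₂) : A × A × A) ∈ Submodule.span A {(P₁, a₁, a₂), (0, P₂, a₃), (0, 0, P₃)} ↔
      ∃ t s, c₁ = t * P₂ ∧ c₂ = t * a₃ + s * P₃ := by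
  simp only [Submodule.mem_span_triple, Prod.smul_mk, smul_eq_mul, Prod.mk_add_mk, Prod.mk.injEq,
    mul_zero, add_zero]
  constructor
  · rintro ⟨u, t, s, hu, h₁, h₂⟩
    obtain rfl : u = 0 := (mul_eq_zero.mp hu).resolve_right hP₁
    exact ⟨t, s, by simpa using h₁.symm, by simpa using h₂.symm⟩
  · rintro ⟨t, s, rfl, rfl⟩
    exact ⟨0, t, s, by simp⟩

theorem forall_mul_mem_span_ofCoords_iff [NoZeroDivisors A] {P₁ P₂ P₃ a₁ a₂ a₃ : A}
    (hP₁ : P₁ ≠ 0) (hP₂ : P₂ ≠ 0) :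
    (∀ r : S, ∀ z ∈ Submodule.span A
        {ofCoords α β (P₁, a₁, a₂), ofCoords α β (0, P₂, a₃), ofCoords α β (0, 0, P₃)},
        r * z ∈ Submodule.span A
          {ofCoords α β (P₁, a₁, a₂), ofCoords α β (0, P₂, a₃), ofCoords α β (0, 0, P₃)}) ↔
      P₃ ∣ P₂ + a₃ * (β - α) ∧ P₂ ∣ P₁ + α * a₁ ∧
        P₂ * P₃ ∣ (P₂ - α * a₃) * a₁ + β * P₂ * a₂ - P₁ * a₃ := by
  rw [forall_mul_mem_span_iff_of_adjoin_eq_top (adjoin_mk_X_eq_top _)]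
  simp only [Set.mem_insert_iff, Set.mem_singleton_iff, forall_eq_or_imp, forall_eq,
    mk_X_mul_ofCoords, ofCoords_mem_span_iff, mk_zero_mem_span_triangular_iff hP₁]
  have hxg₁ : (∃ t s, P₁ + α * a₁ = t * P₂ ∧ a₁ + β * a₂ = t * a₃ + s * P₃) ↔
      P₂ ∣ P₁ + α * a₁ ∧ P₂ * P₃ ∣ (P₂ - α * a₃) * a₁ + β * P₂ * a₂ - P₁ * a₃ := by
    constructor
    · rintro ⟨t, s, ht, hs⟩
      exact ⟨⟨t, by linear_combination ht⟩, ⟨s, by linear_combination P₂ * hs - a₃ * ht⟩⟩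
    · rintro ⟨⟨t, ht⟩, ⟨s, hs⟩⟩
      refine ⟨t, s, by linear_combination ht, mul_left_cancel₀ hP₂ ?_⟩
      linear_combination hs + a₃ * ht
  have hxg₂ : (∃ t s, 0 + α * P₂ = t * P₂ ∧ P₂ + β * a₃ = t * a₃ + s * P₃) ↔
      P₃ ∣ P₂ + a₃ * (β - α) := by
    constructor
    · rintro ⟨t, s, ht, hs⟩
      obtain rfl : α = t := mul_right_cancel₀ hP₂ (by linear_combination ht)
      exact ⟨s, by linear_combination hs⟩
    · rintro ⟨s, hs⟩
      exact ⟨α, s, by ring, by linear_combination hs⟩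
  have hxg₃ : ∃ t s, 0 + α * 0 = t * P₂ ∧ 0 + β * P₃ = t * a₃ + s * P₃ := ⟨0, β, by ring, by ring⟩
  rw [hxg₁, hxg₂]
  tauto

end CubicQuotient

theorem Zp.natCast_ne_zero (p : ℕ) [Fact p.Prime] : (p : Zp p) ≠ 0 := by
  have hinj : Function.Injective (algebraMap ℤ (Zp p)) :=
    IsLocalization.injective (Zp p) (Ideal.primeCompl_le_nonZeroDivisors (Ideal.span {(p : ℤ)}))
  simpa using hinj.ne (Int.natCast_ne_zero.mpr (Fact.out : p.Prime).ne_zero)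

theorem stmt16_general (p : ℕ) [Fact p.Prime] (α β : ℤ)
    (r₁ r₂ r₃ : ℕ) (a₁ a₂ a₃ : Zp p)
    (xq y g₁ g₂ g₃ : Rq p α β) (hx : xq = Ideal.Quotient.mk _ X)
    (hy : y = xq * (xq - (algebraMap (Zp p) (Rq p α β) : Zp p →+* Rq p α β) ((α : ℤ) : Zp p)))
    (hg₁ : g₁ = ((p : Rq p α β)) ^ r₁
      + (algebraMap (Zp p) (Rq p α β) : Zp p →+* Rq p α β) a₁ * xq + (algebraMap (Zp p) (Rq p α β) : Zp p →+* Rq p α β) a₂ * y)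
    (hg₂ : g₂ = ((p : Rq p α β)) ^ r₂ * xq + (algebraMap (Zp p) (Rq p α β) : Zp p →+* Rq p α β) a₃ * y)
    (hg₃ : g₃ = ((p : Rq p α β)) ^ r₃ * y) :
    (∀ r : Rq p α β, ∀ z ∈ Submodule.span (Zp p) {g₁, g₂, g₃},
        r * z ∈ Submodule.span (Zp p) {g₁, g₂, g₃}) ↔
      ((p : Zp p) ^ r₂ + a₃ * ((β - α : ℤ) : Zp p) ∈ Ideal.span {(p : Zp p) ^ r₃} ∧
       (p : Zp p) ^ r₁ + ((α : ℤ) : Zp p) * a₁ ∈ Ideal.span {(p : Zp p) ^ r₂} ∧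
       ((p : Zp p) ^ r₂ - ((α : ℤ) : Zp p) * a₃) * a₁ + ((β : ℤ) : Zp p) * (p : Zp p) ^ r₂ * a₂
           - (p : Zp p) ^ r₁ * a₃ ∈ Ideal.span {(p : Zp p) ^ (r₂ + r₃)}) := by
  have hp : (p : Zp p) ≠ 0 := Zp.natCast_ne_zero p
  have hp_pow (r : ℕ) : (p : Rq p α β) ^ r =
      (algebraMap (Zp p) (Rq p α β) : Zp p →+* Rq p α β) ((p : Zp p) ^ r) := by
    rw [map_pow, map_natCast]
  have hg₁' : g₁ = ofCoords _ _ ((p : Zp p) ^ r₁, a₁, a₂) := by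
    rw [hg₁, hy, hx, hp_pow, ofCoords_apply]
  have hg₂' : g₂ = ofCoords _ _ (0, (p : Zp p) ^ r₂, a₃) := by
    rw [hg₂, hy, hx, hp_pow, ofCoords_apply, map_zero, zero_add]
  have hg₃' : g₃ = ofCoords _ _ (0, 0, (p : Zp p) ^ r₃) := by
    rw [hg₃, hy, hx, hp_pow, ofCoords_apply, map_zero, zero_add, zero_mul, zero_add]
  rw [hg₁', hg₂', hg₃',
    forall_mul_mem_span_ofCoords_iff _ _ (pow_ne_zero r₁ hp) (pow_ne_zero r₂ hp)]
  simp only [Ideal.mem_span_singleton, pow_add, Int.cast_sub]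

/-- In `R = ℤ_p[x]/(x(x−α)(x−β))` with `0, α, β` distinct integers, the
`ℤ_p`-submodule spanned by `g₁ = p^{r₁} + a₁x + a₂x(x−α)`, `g₂ = p^{r₂}x + a₃x(x−α)`,
`g₃ = p^{r₃}x(x−α)` is an ideal of `R` (i.e. is closed under multiplication by `R`) iff
(1) `p^{r₂} + a₃(β−α) ∈ p^{r₃}ℤ_p`, (2) `p^{r₁} + αa₁ ∈ p^{r₂}ℤ_p`, and
(3) `(p^{r₂} − αa₃)a₁ + βp^{r₂}a₂ − p^{r₁}a₃ ∈ p^{r₂+r₃}ℤ_p`. -/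
theorem stmt16 (p : ℕ) [Fact p.Prime] (α β : ℤ)
    (hα : α ≠ 0) (hβ : β ≠ 0) (hαβ : α ≠ β)
    (r₁ r₂ r₃ : ℕ) (a₁ a₂ a₃ : Zp p)
    (xq y g₁ g₂ g₃ : Rq p α β) (hx : xq = Ideal.Quotient.mk _ X)
    (hy : y = xq * (xq - (algebraMap (Zp p) (Rq p α β) : Zp p →+* Rq p α β) ((α : ℤ) : Zp p)))
    (hg₁ : g₁ = ((p : Rq p α β)) ^ r₁
      + (algebraMap (Zp p) (Rq p α β) : Zp p →+* Rq p α β) a₁ * xq + (algebraMap (Zp p) (Rq p α β) : Zp p →+* Rq p α β) a₂ * y)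
    (hg₂ : g₂ = ((p : Rq p α β)) ^ r₂ * xq + (algebraMap (Zp p) (Rq p α β) : Zp p →+* Rq p α β) a₃ * y)
    (hg₃ : g₃ = ((p : Rq p α β)) ^ r₃ * y) :
    (∀ r : Rq p α β, ∀ z ∈ Submodule.span (Zp p) {g₁, g₂, g₃},
        r * z ∈ Submodule.span (Zp p) {g₁, g₂, g₃}) ↔
      ((p : Zp p) ^ r₂ + a₃ * ((β - α : ℤ) : Zp p) ∈ Ideal.span {(p : Zp p) ^ r₃} ∧
       (p : Zp p) ^ r₁ + ((α : ℤ) : Zp p) * a₁ ∈ Ideal.span {(p : Zp p) ^ r₂} ∧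
       ((p : Zp p) ^ r₂ - ((α : ℤ) : Zp p) * a₃) * a₁ + ((β : ℤ) : Zp p) * (p : Zp p) ^ r₂ * a₂
           - (p : Zp p) ^ r₁ * a₃ ∈ Ideal.span {(p : Zp p) ^ (r₂ + r₃)}) :=
  stmt16_general p α β r₁ r₂ r₃ a₁ a₂ a₃ xq y g₁ g₂ g₃ hx hy hg₁ hg₂ hg₃
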